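/- Fix k ≥ 3 and s ≥ 2k+3. Any two matrices C and D, each with s columns, whose first rows both equal a fixed T^{s,(k)} ∈ V^{s,(k)}, whose last rows both equal a fixed B^{s,(k)} ∈ V^{s,(k)} with B^{s,(k)} ≠ T^{s,(k)}, and whose inner rows lie in V^{s,(k)} \ {T^{s,(k)}, B^{s,(k)}}, cannot overlap vertically: for any nonzero vertical shift placing D over C, some entry of D differs from the corresponding entry of C. -/

import Mathlib

open List

/-- `w` avoids `p` as a consecutive factor. -/
def Avoids (p w : List Bool) : Prop := ¬ p <:+: w

/-- The set `V^{i,(k)}` of binary strings `1^k 0 u 1 0^k` of length `i`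
where `0u1` avoids `0^k` and `1^k` as factors (`true` plays the role of `1`). -/
def Vik (k i : ℕ) : Set (List Bool) :=
  {w | ∃ u : List Bool,
      w = List.replicate k true ++ ([false] ++ u ++ [true]) ++ List.replicate k false ∧
      w.length = i ∧
      Avoids (List.replicate k false) ([false] ++ u ++ [true]) ∧
      Avoids (List.replicate k true) ([false] ++ u ++ [true])}

/-- `u` and `v` are non-overlapping (in the direction prefix-of-`u` /
suffix-of-`v`): no proper nonempty prefix of `u` equals a proper nonempty
suffix of `v`. -/
def CrossBF (u v : List Bool) : Prop :=
  ∀ p : List Bool, p ≠ [] → p ≠ u → p ≠ v → ¬(p <+: u ∧ p <:+ v)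

/-- A variable-dimension binary matrix is modeled as a list of rows.  `entryZ M i j` is
the entry of `M` in row `i`, column `j` (as integers), when it exists. -/
def entryZ (M : List (List Bool)) (i j : ℤ) : Option Bool :=
  if 0 ≤ i ∧ 0 ≤ j then (M[i.toNat]?).bind (fun r => r[j.toNat]?) else none

/-- The translate of `B` by `(a, b)` agrees with `A` on all common entries. -/
def AgreeAt (A B : List (List Bool)) (a b : ℤ) : Prop :=
  ∀ i j : ℤ, ∀ x y : Bool,
    entryZ A i j = some x → entryZ B (i - a) (j - b) = some y → x = y

/-- The supports of `A` and of the translate of `B` by `(a, b)` intersect. -/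
def MeetsAt (A B : List (List Bool)) (a b : ℤ) : Prop :=
  ∃ i j : ℤ, ∃ x y : Bool,
    entryZ A i j = some x ∧ entryZ B (i - a) (j - b) = some y

/-- `A` and `B` overlap: some translate of `B` over `A` (not the trivial
coincidence of a matrix with itself) has nonempty intersection with `A` and
agrees with `A` on all common entries. -/
def MOverlap (A B : List (List Bool)) : Prop :=
  ∃ a b : ℤ, ¬(a = 0 ∧ b = 0 ∧ A = B) ∧ MeetsAt A B a b ∧ AgreeAt A B a b

/-- The matrices `M_{h,s}^{(k)}` with `h` rows taken from `V^{s,(k)}`, first row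
`T`, last row `B`, and inner rows different from `T` and `B`. -/
def MatSet (k h s : ℕ) (T B : List Bool) : Set (List (List Bool)) :=
  {M | M.length = h ∧ M.head? = some T ∧ M.getLast? = some B ∧
       (∀ r ∈ M, r ∈ Vik k s) ∧
       (∀ i : ℕ, ∀ r : List Bool, 0 < i → i + 1 < h → M[i]? = some r →
          r ≠ T ∧ r ≠ B)}

lemma length_of_mem_Vik {k s : ℕ} {w : List Bool} (h : w ∈ Vik k s) : w.length = s :=
  h.choose_spec.2.1

lemma entryZ_natCast (M : List (List Bool)) (i j : ℕ) :
    entryZ M i j = (M[i]?).bind (·[j]?) := by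
  simp [entryZ]

lemma lt_length_of_entryZ_eq_some {M : List (List Bool)} {i j : ℤ} {x : Bool}
    (h : entryZ M i j = some x) : 0 ≤ i ∧ i.toNat < M.length := by
  unfold entryZ at h
  split_ifs at h with hij
  obtain ⟨r, hr, -⟩ := Option.bind_eq_some_iff.1 h
  exact ⟨hij.1, (List.getElem?_eq_some_iff.1 hr).1⟩

lemma MeetsAt.symm {A B : List (List Bool)} {a b : ℤ} (h : MeetsAt A B a b) :
    MeetsAt B A (-a) (-b) := by
  obtain ⟨i, j, x, y, hx, hy⟩ := h
  exact ⟨i - a, j - b, y, x, hy, by simpa using hx⟩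

lemma AgreeAt.symm {A B : List (List Bool)} {a b : ℤ} (h : AgreeAt A B a b) :
    AgreeAt B A (-a) (-b) := by
  intro i j x y hx hy
  exact (h (i + a) (j + b) y x (by simpa using hy) (by simpa using hx)).symm

lemma MeetsAt.toNat_lt_length {A B : List (List Bool)} {a b : ℤ} (h : MeetsAt A B a b) :
    a.toNat < A.length := by
  obtain ⟨i, _, _, _, hx, hy⟩ := h
  have hi := lt_length_of_entryZ_eq_some hx
  have hia := (lt_length_of_entryZ_eq_some hy).1
  omega

lemma AgreeAt.row_eq {A B : List (List Bool)} {a : ℕ} (h : AgreeAt A B a 0) {n : ℕ}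
    {r r' : List Bool} (hr : A[n + a]? = some r) (hr' : B[n]? = some r')
    (hlen : r.length = r'.length) : r = r' := by
  refine List.ext_getElem hlen fun j hj hj' => h (n + a) j _ _ ?_ ?_
  · rw [← Nat.cast_add, entryZ_natCast, hr]
    simp [hj]
  · rw [add_sub_cancel_right, sub_zero, entryZ_natCast, hr']
    simp [hj']

lemma ne_head_of_mem_MatSet {k h s : ℕ} {T B : List Bool} {M : List (List Bool)}
    (hM : M ∈ MatSet k h s T B) (hTB : T ≠ B) {i : ℕ} (hi : 0 < i) {r : List Bool}
    (hr : M[i]? = some r) : r ≠ T := by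
  obtain ⟨hlen, -, hlast, -, hinner⟩ := hM
  have hih : i < h := hlen ▸ (List.getElem?_eq_some_iff.1 hr).1
  rcases Nat.lt_or_ge (i + 1) h with hin | hout
  · exact (hinner i r hi hin hr).1
  · rw [List.getLast?_eq_getElem?, hlen, show h - 1 = i by omega, hr] at hlast
    rintro rfl
    exact hTB (Option.some_inj.1 hlast)

/-- The row of `C` under the first row `T` of `D` is a later row of `C`, and `T` occurs in `C`
only as its first row. -/
lemma not_agreeAt_of_pos {k s h₁ h₂ : ℕ} {T B : List Bool} (hTB : T ≠ B)
    {C D : List (List Bool)} (hC : C ∈ MatSet k h₁ s T B) (hD : D ∈ MatSet k h₂ s T B)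
    {a : ℤ} (ha : 0 < a) (hmeet : MeetsAt C D a 0) : ¬ AgreeAt C D a 0 := by
  intro hagree
  lift a to ℕ using ha.le
  have haC : a < C.length := by simpa using hmeet.toNat_lt_length
  have hCa : C[0 + a]? = some C[a] := by simp [haC]
  have hD0 : D[0]? = some T := by rw [← List.head?_eq_getElem?]; exact hD.2.1
  have hlen : C[a].length = T.length := by
    rw [length_of_mem_Vik (hC.2.2.2.1 _ (List.getElem_mem haC)),
      length_of_mem_Vik (hD.2.2.2.1 T (List.mem_of_getElem? hD0))]
  exact ne_head_of_mem_MatSet hC hTB (by exact_mod_cast ha) (List.getElem?_eq_getElem haC)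
    (hagree.row_eq hCa hD0 hlen)

theorem stmt_9_general (k s : ℕ)
    (T B : List Bool) (hTB : T ≠ B)
    (C D : List (List Bool)) (h₁ h₂ : ℕ)
    (hC : C ∈ MatSet k h₁ s T B) (hD : D ∈ MatSet k h₂ s T B)
    (a : ℤ) (ha : a ≠ 0) (hmeet : MeetsAt C D a 0) :
    ¬ AgreeAt C D a 0 := by
  rcases ha.lt_or_gt with hneg | hpos
  · intro hagree
    exact not_agreeAt_of_pos hTB hD hC (neg_pos.2 hneg) (by simpa using hmeet.symm)
      (by simpa using hagree.symm)
  · exact not_agreeAt_of_pos hTB hC hD hpos hmeet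

/-- Two matrices with `s` columns, fixed common first row `T` and last row `B`
(`T ≠ B`, both in `V^{s,(k)}`), and inner rows in `V^{s,(k)} \ {T, B}`, cannot
overlap vertically: any nonzero vertical shift whose supports intersect yields a
mismatch. -/
theorem stmt_9 (k s : ℕ) (hk : 3 ≤ k) (hs : 2 * k + 3 ≤ s)
    (T B : List Bool) (hT : T ∈ Vik k s) (hB : B ∈ Vik k s) (hTB : T ≠ B)
    (C D : List (List Bool)) (h₁ h₂ : ℕ) (hh₁ : 2 ≤ h₁) (hh₂ : 2 ≤ h₂)
    (hC : C ∈ MatSet k h₁ s T B) (hD : D ∈ MatSet k h₂ s T B)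
    (a : ℤ) (ha : a ≠ 0) (hmeet : MeetsAt C D a 0) :
    ¬ AgreeAt C D a 0 :=
  stmt_9_general k s T B hTB C D h₁ h₂ hC hD a ha hmeet
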